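/- arXiv:1805.02345 — 2 statements merged into one kernel-verified Lean document; each statement's English description precedes it below -/
import Mathlib

section
/- Let G be a finite simple graph with no isolated vertices, let H be a finite simple graph with γ(H) ≥ 2, and let S be a minimum total dominating set (γ_t-set) of G. Then for every vertex h ∈ V(H), the set D = S × {h} is a minimum dominating set (γ-set) of the lexicographic product G∘H; in particular γ(G∘H) = γ_t(G). -/
open Finset

variable {α β : Type*}

/-- `D` is a dominating set of `G`: every vertex outside `D` has a neighbor in `D`. -/
def IsDomSet (G : SimpleGraph α) (D : Finset α) : Prop :=
  ∀ v ∉ D, ∃ u ∈ D, G.Adj u v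

/-- The domination number `γ(G)`: minimum cardinality of a dominating set. -/
noncomputable def domNum (G : SimpleGraph α) : ℕ :=
  sInf {n | ∃ D : Finset α, IsDomSet G D ∧ D.card = n}

/-- The degree of vertex `v` in `G`. -/
noncomputable def vdeg (G : SimpleGraph α) (v : α) : ℕ :=
  Nat.card (G.neighborSet v)

/-- The (domination) cover number of a set of vertices `A`: the sum of degrees. -/
noncomputable def coverNum (G : SimpleGraph α) (A : Finset α) : ℕ :=
  ∑ v ∈ A, vdeg G v

/-- `D` is a minimum dominating set (γ-set) of `G`. -/
def IsGammaSet (G : SimpleGraph α) (D : Finset α) : Prop :=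
  IsDomSet G D ∧ D.card = domNum G

/-- `S` is a total dominating set of `G`: every vertex has a neighbor in `S`. -/
def IsTotalDomSet (G : SimpleGraph α) (S : Finset α) : Prop :=
  ∀ v, ∃ u ∈ S, G.Adj u v

/-- The total domination number `γ_t(G)`. -/
noncomputable def totalDomNum (G : SimpleGraph α) : ℕ :=
  sInf {n | ∃ S : Finset α, IsTotalDomSet G S ∧ S.card = n}

/-- The lexicographic product `G ∘ H` of two simple graphs. -/
def lexProd (G : SimpleGraph α) (H : SimpleGraph β) : SimpleGraph (α × β) where
  Adj a b := G.Adj a.1 b.1 ∨ (a.1 = b.1 ∧ H.Adj a.2 b.2)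
  symm := by
    constructor
    rintro a b (h | ⟨h1, h2⟩)
    · exact Or.inl h.symm
    · exact Or.inr ⟨h1.symm, h2.symm⟩
  loopless := by
    constructor
    rintro a (h | ⟨_, h⟩)
    · exact G.irrefl h
    · exact H.irrefl h

/-!
A γ_t-set `S` of `G` yields the dominating set `S × {h}` of `G ∘ H`. Conversely, let `D`
dominate `G ∘ H` and let `A` be its projection to `G`. If a vertex `a` of `G` has no
`G`-neighbour in `A`, the fibre `{a} × V(H)` can only be dominated from inside, so `D` has at
least `γ(H) ≥ 2` vertices over `a`. Adding to `A` one `G`-neighbour of each such `a` therefore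
gives a total dominating set of `G` with at most `|D|` vertices.
-/

lemma domNum_le_card {G : SimpleGraph α} {D : Finset α} (hD : IsDomSet G D) :
    domNum G ≤ D.card :=
  Nat.sInf_le ⟨D, hD, rfl⟩

lemma totalDomNum_le_card {G : SimpleGraph α} {S : Finset α} (hS : IsTotalDomSet G S) :
    totalDomNum G ≤ S.card :=
  Nat.sInf_le ⟨S, hS, rfl⟩

lemma exists_isDomSet_card_eq_domNum {G : SimpleGraph α} {D : Finset α} (hD : IsDomSet G D) :
    ∃ D' : Finset α, IsDomSet G D' ∧ D'.card = domNum G :=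
  Nat.sInf_mem (s := {n | ∃ D : Finset α, IsDomSet G D ∧ D.card = n}) ⟨D.card, D, hD, rfl⟩

lemma IsTotalDomSet.isDomSet_lexProd {G : SimpleGraph α} {S : Finset α} (hS : IsTotalDomSet G S)
    (H : SimpleGraph β) (h : β) : IsDomSet (lexProd G H) (S ×ˢ {h}) := by
  rintro ⟨a, -⟩ -
  obtain ⟨u, hu, hua⟩ := hS a
  exact ⟨(u, h), Finset.mem_product.mpr ⟨hu, Finset.mem_singleton_self h⟩, Or.inl hua⟩

lemma exists_isTotalDomSet_card_le_add {G : SimpleGraph α} (hG : ∀ v : α, ∃ u, G.Adj v u)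
    (A B : Finset α) (hB : ∀ v, (∃ u ∈ A, G.Adj u v) ∨ v ∈ B) :
    ∃ S : Finset α, IsTotalDomSet G S ∧ S.card ≤ A.card + B.card := by
  classical
  choose nbr hnbr using hG
  refine ⟨A ∪ B.image nbr, fun v => ?_, ?_⟩
  · rcases hB v with ⟨u, hu, huv⟩ | hv
    · exact ⟨u, Finset.mem_union_left _ hu, huv⟩
    · exact ⟨nbr v, Finset.mem_union_right _ (Finset.mem_image_of_mem nbr hv), (hnbr v).symm⟩
  · calc (A ∪ B.image nbr).card ≤ A.card + (B.image nbr).card := Finset.card_union_le _ _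
      _ ≤ A.card + B.card := Nat.add_le_add_left Finset.card_image_le _

lemma card_add_card_le_of_two_le_card_fibre [DecidableEq α] {D : Finset (α × β)}
    {A B : Finset α} (hA : D.image Prod.fst = A) (hBA : B ⊆ A)
    (hB : ∀ a ∈ B, 2 ≤ (D.filter (·.1 = a)).card) :
    A.card + B.card ≤ D.card := by
  have hfibre : ∀ a ∈ A \ B, 1 ≤ (D.filter (·.1 = a)).card := by
    intro a ha
    obtain ⟨p, hp, rfl⟩ := Finset.mem_image.mp (hA ▸ (Finset.mem_sdiff.mp ha).1)
    exact Finset.card_pos.mpr ⟨p, Finset.mem_filter.mpr ⟨hp, rfl⟩⟩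
  calc A.card + B.card = (A \ B).card • 1 + B.card • 2 := by
        rw [smul_eq_mul, smul_eq_mul, ← Finset.card_sdiff_add_card_eq_card hBA]; ring
    _ ≤ ∑ a ∈ A \ B, (D.filter (·.1 = a)).card + ∑ a ∈ B, (D.filter (·.1 = a)).card :=
        add_le_add (Finset.card_nsmul_le_sum _ _ _ hfibre) (Finset.card_nsmul_le_sum _ _ _ hB)
    _ = ∑ a ∈ A, (D.filter (·.1 = a)).card := Finset.sum_sdiff hBA
    _ = D.card := by rw [← hA, Finset.card_eq_sum_card_image Prod.fst D]

section Fibre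

variable [DecidableEq α] [DecidableEq β] {G : SimpleGraph α} {H : SimpleGraph β}
  {D : Finset (α × β)}

lemma IsDomSet.image_snd_fibre (hD : IsDomSet (lexProd G H) D) {a : α}
    (ha : ∀ u ∈ D.image Prod.fst, ¬ G.Adj u a) :
    IsDomSet H ((D.filter (·.1 = a)).image Prod.snd) := by
  intro y hy
  have hay : (a, y) ∉ D := fun hmem =>
    hy (Finset.mem_image.mpr ⟨(a, y), Finset.mem_filter.mpr ⟨hmem, rfl⟩, rfl⟩)
  obtain ⟨u, hu, hadj⟩ := hD (a, y) hay
  rcases hadj with hadj | ⟨hua, hadj⟩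
  · exact absurd hadj (ha u.1 (Finset.mem_image_of_mem _ hu))
  · exact ⟨u.2, Finset.mem_image.mpr ⟨u, Finset.mem_filter.mpr ⟨hu, hua⟩, rfl⟩, hadj⟩

lemma IsDomSet.two_le_card_fibre (hD : IsDomSet (lexProd G H) D) (hH : 2 ≤ domNum H) {a : α}
    (ha : ∀ u ∈ D.image Prod.fst, ¬ G.Adj u a) :
    2 ≤ (D.filter (·.1 = a)).card :=
  calc 2 ≤ domNum H := hH
    _ ≤ ((D.filter (·.1 = a)).image Prod.snd).card := domNum_le_card (hD.image_snd_fibre ha)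
    _ ≤ (D.filter (·.1 = a)).card := Finset.card_image_le

lemma IsDomSet.mem_image_fst (hD : IsDomSet (lexProd G H) D) (hH : 2 ≤ domNum H) {a : α}
    (ha : ∀ u ∈ D.image Prod.fst, ¬ G.Adj u a) :
    a ∈ D.image Prod.fst := by
  obtain ⟨p, hp⟩ := Finset.card_pos.mp (by linarith [hD.two_le_card_fibre hH ha])
  obtain ⟨hpD, rfl⟩ := Finset.mem_filter.mp hp
  exact Finset.mem_image_of_mem _ hpD

end Fibre

lemma totalDomNum_le_card_of_isDomSet_lexProd {G : SimpleGraph α} {H : SimpleGraph β}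
    (hG : ∀ v : α, ∃ u, G.Adj v u) (hH : 2 ≤ domNum H) {D : Finset (α × β)}
    (hD : IsDomSet (lexProd G H) D) :
    totalDomNum G ≤ D.card := by
  classical
  set A := D.image Prod.fst
  set B := A.filter (fun a => ∀ u ∈ A, ¬ G.Adj u a)
  have hcover : ∀ v, (∃ u ∈ A, G.Adj u v) ∨ v ∈ B := by
    intro v
    by_cases hv : ∃ u ∈ A, G.Adj u v
    · exact Or.inl hv
    · push Not at hv
      exact Or.inr (Finset.mem_filter.mpr ⟨hD.mem_image_fst hH hv, hv⟩)
  obtain ⟨S, hS, hScard⟩ := exists_isTotalDomSet_card_le_add hG A B hcover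
  calc totalDomNum G ≤ S.card := totalDomNum_le_card hS
    _ ≤ A.card + B.card := hScard
    _ ≤ D.card := card_add_card_le_of_two_le_card_fibre rfl (Finset.filter_subset _ _)
        fun a ha => hD.two_le_card_fibre hH (Finset.mem_filter.mp ha).2

theorem lexProd_gammaSet_of_totalDomSet_general
    (G : SimpleGraph α) (H : SimpleGraph β)
    (hG : ∀ v : α, ∃ u, G.Adj v u) (hH : 2 ≤ domNum H)
    (S : Finset α) (hS : IsTotalDomSet G S) (hScard : S.card = totalDomNum G)
    (h : β) :
    IsGammaSet (lexProd G H) (S ×ˢ {h}) ∧ domNum (lexProd G H) = totalDomNum G := by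
  have hdom : IsDomSet (lexProd G H) (S ×ˢ {h}) := hS.isDomSet_lexProd H h
  have hcard : (S ×ˢ {h}).card = totalDomNum G := by
    rw [Finset.card_product, Finset.card_singleton, mul_one, hScard]
  obtain ⟨D, hD, hDcard⟩ := exists_isDomSet_card_eq_domNum hdom
  have heq : domNum (lexProd G H) = totalDomNum G :=
    le_antisymm (hcard ▸ domNum_le_card hdom)
      (hDcard ▸ totalDomNum_le_card_of_isDomSet_lexProd hG hH hD)
  exact ⟨⟨hdom, hcard.trans heq.symm⟩, heq⟩

/-- If `G` has no isolated vertices, `γ(H) ≥ 2`, and `S` is a minimum total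
dominating set of `G`, then for every vertex `h` of `H` the set `S × {h}` is a
minimum dominating set of `G ∘ H`; in particular `γ(G ∘ H) = γ_t(G)`. -/
theorem lexProd_gammaSet_of_totalDomSet [Fintype α] [Fintype β]
    (G : SimpleGraph α) (H : SimpleGraph β)
    (hG : ∀ v : α, ∃ u, G.Adj v u) (hH : 2 ≤ domNum H)
    (S : Finset α) (hS : IsTotalDomSet G S) (hScard : S.card = totalDomNum G)
    (h : β) :
    IsGammaSet (lexProd G H) (S ×ˢ {h}) ∧ domNum (lexProd G H) = totalDomNum G :=
  lexProd_gammaSet_of_totalDomSet_general G H hG hH S hS hScard h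
end

section
/- Let G be a finite simple graph with no isolated vertices, let H be a finite simple graph, let S be a total dominating set of G, and let h ∈ V(H). Then the set D = S × {h} is a dominating set of the lexicographic product G∘H and its domination cover number satisfies C_D(G∘H) = C_S(G) · |V(H)| + |S| · deg_H(h). -/
open Finset

variable {α β : Type*}

lemma vdeg_eq_ncard (G : SimpleGraph α) (v : α) : vdeg G v = (G.neighborSet v).ncard :=
  Nat.card_coe_set_eq _

lemma lexProd_neighborSet (G : SimpleGraph α) (H : SimpleGraph β) (v : α) (h : β) :
    (lexProd G H).neighborSet (v, h) =
      G.neighborSet v ×ˢ Set.univ ∪ {v} ×ˢ H.neighborSet h := by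
  ext ⟨u, y⟩
  simp [lexProd, eq_comm]

-- The finiteness assumptions matter: `vdeg` is a `Nat.card`, hence `0` on infinite neighbourhoods.
lemma vdeg_lexProd [Finite β] (G : SimpleGraph α) [G.LocallyFinite] (H : SimpleGraph β)
    (v : α) (h : β) :
    vdeg (lexProd G H) (v, h) = vdeg G v * Nat.card β + vdeg H h := by
  have hdisj : Disjoint (G.neighborSet v ×ˢ Set.univ) ({v} ×ˢ H.neighborSet h) := by
    refine Set.disjoint_left.mpr fun ⟨u, y⟩ hG hH => ?_
    obtain rfl : u = v := hH.1
    exact G.irrefl hG.1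
  rw [vdeg_eq_ncard, vdeg_eq_ncard, vdeg_eq_ncard, lexProd_neighborSet,
    Set.ncard_union_eq hdisj, Set.ncard_prod, Set.ncard_prod, Set.ncard_univ,
    Set.ncard_singleton, one_mul]

lemma coverNum_lexProd_product_singleton [Finite β] (G : SimpleGraph α) [G.LocallyFinite]
    (H : SimpleGraph β) (S : Finset α) (h : β) :
    coverNum (lexProd G H) (S ×ˢ {h}) = coverNum G S * Nat.card β + #S * vdeg H h := by
  rw [coverNum, coverNum, sum_product]
  simp only [sum_singleton, vdeg_lexProd]
  rw [sum_add_distrib, sum_mul, sum_const, smul_eq_mul]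

theorem lexProd_coverNum_of_totalDomSet_general [Fintype α] [Fintype β]
    (G : SimpleGraph α) (H : SimpleGraph β)
    (S : Finset α) (hS : IsTotalDomSet G S) (h : β) :
    IsDomSet (lexProd G H) (S ×ˢ {h}) ∧
    coverNum (lexProd G H) (S ×ˢ {h}) =
      coverNum G S * Fintype.card β + S.card * vdeg H h := by
  classical
  rw [Fintype.card_eq_nat_card]
  exact ⟨hS.isDomSet_lexProd H h, coverNum_lexProd_product_singleton G H S h⟩

/-- If `G` has no isolated vertices, `S` is a total dominating set of `G` and
`h ∈ V(H)`, then `D = S × {h}` is a dominating set of `G ∘ H` with cover number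
`C_D(G ∘ H) = C_S(G) · |V(H)| + |S| · deg_H(h)`. -/
theorem lexProd_coverNum_of_totalDomSet [Fintype α] [Fintype β]
    (G : SimpleGraph α) (H : SimpleGraph β)
    (hG : ∀ v : α, ∃ u, G.Adj v u)
    (S : Finset α) (hS : IsTotalDomSet G S) (h : β) :
    IsDomSet (lexProd G H) (S ×ˢ {h}) ∧
    coverNum (lexProd G H) (S ×ˢ {h}) =
      coverNum G S * Fintype.card β + S.card * vdeg H h :=
  lexProd_coverNum_of_totalDomSet_general G H S hS h
end
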